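/- arXiv:1807.06881 — 3 statements merged into one kernel-verified Lean document; each statement's English description precedes it below -/
import Mathlib

section
/- Let 1 < q < p < r, A > 0, B > 0, and M(t) = t^{p-q} A - t^{r-q} B for t > 0. If 0 < C < M(t_max), where t_max = ((p-q)A/((r-q)B))^{1/(r-p)}, then the equation M(t) = C has exactly two positive solutions t₀ < t_max < t₁, and moreover M'(t₀) > 0 and M'(t₁) < 0. -/
/-!
With `a = p - q < b = r - q`, the derivative of `M t = t ^ a * A - t ^ b * B` is
`t ^ (a - 1) * (a * A - b * B * t ^ (b - a))`, which changes sign exactly once, at `tmax`.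
So `M` increases strictly on `[0, tmax]` and decreases strictly on `[tmax, ∞)`. Since `M 0 = 0`
and `M` vanishes again at `(A / B) ^ (1 / (b - a)) > tmax`, each of the two monotone pieces takes
the value `C ∈ (0, M tmax)` exactly once.
-/

open Real Set

theorem exists_pair_eq_of_strictMonoOn_of_strictAntiOn {f : ℝ → ℝ} {x₀ c x₁ y : ℝ}
    (hx₀c : x₀ ≤ c) (hcx₁ : c ≤ x₁) (hf : ContinuousOn f (Icc x₀ x₁))
    (hmono : StrictMonoOn f (Icc x₀ c)) (hanti : StrictAntiOn f (Ici c))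
    (hx₀ : f x₀ < y) (hx₁ : f x₁ < y) (hc : y < f c) :
    ∃ t₀ t₁, t₀ ∈ Ioo x₀ c ∧ t₁ ∈ Ioo c x₁ ∧ f t₀ = y ∧ f t₁ = y ∧
      ∀ t, x₀ ≤ t → f t = y → t = t₀ ∨ t = t₁ := by
  obtain ⟨t₀, ht₀, hft₀⟩ := intermediate_value_Ioo hx₀c
    (hf.mono (Icc_subset_Icc_right hcx₁)) ⟨hx₀, hc⟩
  obtain ⟨t₁, ht₁, hft₁⟩ := intermediate_value_Ioo' hcx₁
    (hf.mono (Icc_subset_Icc_left hx₀c)) ⟨hx₁, hc⟩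
  refine ⟨t₀, t₁, ht₀, ht₁, hft₀, hft₁, fun t ht hft ↦ ?_⟩
  rcases lt_trichotomy t c with htc | rfl | hct
  · exact .inl <| hmono.injOn ⟨ht, htc.le⟩ (Ioo_subset_Icc_self ht₀) (hft.trans hft₀.symm)
  · exact absurd hft hc.ne'
  · exact .inr <| hanti.injOn hct.le ht₁.1.le (hft.trans hft₁.symm)

noncomputable def rpowDiff (a b A B t : ℝ) : ℝ := t ^ a * A - t ^ b * B

namespace rpowDiff

variable {a b A B t : ℝ}

theorem continuous (ha : 0 ≤ a) (hb : 0 ≤ b) : Continuous (rpowDiff a b A B) :=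
  ((continuous_rpow_const ha).mul continuous_const).sub
    ((continuous_rpow_const hb).mul continuous_const)

theorem apply_zero (ha : 0 < a) (hb : 0 < b) : rpowDiff a b A B 0 = 0 := by
  simp [rpowDiff, zero_rpow ha.ne', zero_rpow hb.ne']

theorem eq_rpow_mul (ht : 0 < t) :
    rpowDiff a b A B t = t ^ a * (A - B * t ^ (b - a)) := by
  rw [rpowDiff, ← add_sub_cancel a b, rpow_add ht, add_sub_cancel_left]; ring

theorem hasDerivAt (ht : 0 < t) :
    HasDerivAt (rpowDiff a b A B) (t ^ (a - 1) * (a * A - b * B * t ^ (b - a))) t := by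
  have h := ((hasDerivAt_rpow_const (p := a) (.inl ht.ne')).mul_const A).sub
    ((hasDerivAt_rpow_const (p := b) (.inl ht.ne')).mul_const B)
  refine h.congr_deriv ?_
  rw [show b - 1 = (a - 1) + (b - a) by ring, rpow_add ht]; ring

noncomputable def critPoint (a b A B : ℝ) : ℝ := (a * A / (b * B)) ^ (b - a)⁻¹

noncomputable def posRoot (a b A B : ℝ) : ℝ := (A / B) ^ (b - a)⁻¹

theorem critPoint_pos (ha : 0 < a) (hab : a < b) (hA : 0 < A) (hB : 0 < B) :
    0 < critPoint a b A B :=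
  rpow_pos_of_pos (div_pos (mul_pos ha hA) (mul_pos (ha.trans hab) hB)) _

theorem lt_critPoint_iff (ha : 0 < a) (hab : a < b) (hA : 0 < A) (hB : 0 < B) (ht : 0 < t) :
    t < critPoint a b A B ↔ b * B * t ^ (b - a) < a * A := by
  have hbB := mul_pos (ha.trans hab) hB
  rw [critPoint, lt_rpow_inv_iff_of_pos ht.le (div_pos (mul_pos ha hA) hbB).le (sub_pos.2 hab),
    lt_div_iff₀ hbB, mul_comm (t ^ (b - a))]

theorem critPoint_lt_iff (ha : 0 < a) (hab : a < b) (hA : 0 < A) (hB : 0 < B) (ht : 0 < t) :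
    critPoint a b A B < t ↔ a * A < b * B * t ^ (b - a) := by
  have hbB := mul_pos (ha.trans hab) hB
  rw [critPoint, rpow_inv_lt_iff_of_pos (div_pos (mul_pos ha hA) hbB).le ht.le (sub_pos.2 hab),
    div_lt_iff₀ hbB, mul_comm (t ^ (b - a))]

theorem deriv_pos (ha : 0 < a) (hab : a < b) (hA : 0 < A) (hB : 0 < B) (ht : 0 < t)
    (htc : t < critPoint a b A B) : 0 < deriv (rpowDiff a b A B) t := by
  rw [(hasDerivAt ht).deriv]
  exact mul_pos (rpow_pos_of_pos ht _) (sub_pos.2 ((lt_critPoint_iff ha hab hA hB ht).1 htc))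

theorem deriv_neg (ha : 0 < a) (hab : a < b) (hA : 0 < A) (hB : 0 < B)
    (htc : critPoint a b A B < t) : deriv (rpowDiff a b A B) t < 0 := by
  have ht := (critPoint_pos ha hab hA hB).trans htc
  rw [(hasDerivAt ht).deriv]
  exact mul_neg_of_pos_of_neg (rpow_pos_of_pos ht _)
    (sub_neg.2 ((critPoint_lt_iff ha hab hA hB ht).1 htc))

theorem strictMonoOn_Icc (ha : 0 < a) (hab : a < b) (hA : 0 < A) (hB : 0 < B) :
    StrictMonoOn (rpowDiff a b A B) (Icc 0 (critPoint a b A B)) :=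
  strictMonoOn_of_deriv_pos (convex_Icc _ _)
    (continuous ha.le (ha.trans hab).le).continuousOn fun _ ht ↦ by
      rw [interior_Icc] at ht
      exact deriv_pos ha hab hA hB ht.1 ht.2

theorem strictAntiOn_Ici (ha : 0 < a) (hab : a < b) (hA : 0 < A) (hB : 0 < B) :
    StrictAntiOn (rpowDiff a b A B) (Ici (critPoint a b A B)) :=
  strictAntiOn_of_deriv_neg (convex_Ici _)
    (continuous ha.le (ha.trans hab).le).continuousOn fun _ ht ↦ by
      rw [interior_Ici] at ht
      exact deriv_neg ha hab hA hB ht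

theorem apply_posRoot (hab : a < b) (hA : 0 < A) (hB : 0 < B) :
    rpowDiff a b A B (posRoot a b A B) = 0 := by
  rw [posRoot, eq_rpow_mul (rpow_pos_of_pos (div_pos hA hB) _),
    rpow_inv_rpow (div_pos hA hB).le (sub_pos.2 hab).ne', mul_div_cancel₀ A hB.ne', sub_self,
    mul_zero]

theorem critPoint_lt_posRoot (ha : 0 < a) (hab : a < b) (hA : 0 < A) (hB : 0 < B) :
    critPoint a b A B < posRoot a b A B := by
  have hb := ha.trans hab
  refine rpow_lt_rpow (div_pos (mul_pos ha hA) (mul_pos hb hB)).le ?_ (inv_pos.2 (sub_pos.2 hab))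
  rw [div_lt_div_iff₀ (mul_pos hb hB) hB]
  nlinarith [mul_pos hA hB]

end rpowDiff

theorem stmt_3_general (p q r A B C : ℝ) (hqp : q < p) (hpr : p < r)
    (hA : 0 < A) (hB : 0 < B) :
    let M : ℝ → ℝ := fun t => t ^ (p - q) * A - t ^ (r - q) * B
    let tmax : ℝ := ((p - q) * A / ((r - q) * B)) ^ (1 / (r - p))
    0 < C → C < M tmax →
    ∃ t₀ t₁ : ℝ, 0 < t₀ ∧ t₀ < tmax ∧ tmax < t₁ ∧
      M t₀ = C ∧ M t₁ = C ∧
      (∀ t : ℝ, 0 < t → M t = C → t = t₀ ∨ t = t₁) ∧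
      0 < deriv M t₀ ∧ deriv M t₁ < 0 := by
  intro M tmax hC hCM
  have ha : 0 < p - q := sub_pos.2 hqp
  have hab : p - q < r - q := by linarith
  have htmax : tmax = rpowDiff.critPoint (p - q) (r - q) A B := by
    show ((p - q) * A / ((r - q) * B)) ^ (1 / (r - p)) = _
    rw [rpowDiff.critPoint, show r - q - (p - q) = r - p by ring, one_div]
  rw [htmax] at hCM ⊢
  obtain ⟨t₀, t₁, ht₀, ht₁, hMt₀, hMt₁, hunique⟩ :=
    exists_pair_eq_of_strictMonoOn_of_strictAntiOn (rpowDiff.critPoint_pos ha hab hA hB).le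
      (rpowDiff.critPoint_lt_posRoot ha hab hA hB).le
      (rpowDiff.continuous ha.le (ha.trans hab).le).continuousOn
      (rpowDiff.strictMonoOn_Icc ha hab hA hB) (rpowDiff.strictAntiOn_Ici ha hab hA hB)
      (by rwa [rpowDiff.apply_zero ha (ha.trans hab)])
      (by rwa [rpowDiff.apply_posRoot hab hA hB]) hCM
  exact ⟨t₀, t₁, ht₀.1, ht₀.2, ht₁.1, hMt₀, hMt₁, fun t ht ↦ hunique t ht.le,
    rpowDiff.deriv_pos ha hab hA hB ht₀.1 ht₀.2, rpowDiff.deriv_neg ha hab hA hB ht₁.1⟩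

theorem stmt_3 (p q r A B C : ℝ) (hq : 1 < q) (hqp : q < p) (hpr : p < r)
    (hA : 0 < A) (hB : 0 < B) :
    let M : ℝ → ℝ := fun t => t ^ (p - q) * A - t ^ (r - q) * B
    let tmax : ℝ := ((p - q) * A / ((r - q) * B)) ^ (1 / (r - p))
    0 < C → C < M tmax →
    ∃ t₀ t₁ : ℝ, 0 < t₀ ∧ t₀ < tmax ∧ tmax < t₁ ∧
      M t₀ = C ∧ M t₁ = C ∧
      (∀ t : ℝ, 0 < t → M t = C → t = t₀ ∨ t = t₁) ∧
      0 < deriv M t₀ ∧ deriv M t₁ < 0 :=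
  stmt_3_general p q r A B C hqp hpr hA hB
end

section
/- Let 1 < q < p < r and A, B, C > 0, and suppose 0 < C < M(t_max), where M(t) = t^{p-q}A - t^{r-q}B and t_max = ((p-q)A/((r-q)B))^{1/(r-p)}. Define Φ(t) = (t^p/p)A - (t^q/q)C - (t^r/r)B. Then Φ has exactly two critical points 0 < t₀ < t₁ in (0,∞), with Φ''(t₀) > 0 and Φ''(t₁) < 0. -/
open Real Filter Set Topology

theorem stmt_15 (p q r A B C : ℝ) (hq : 1 < q) (hqp : q < p) (hpr : p < r)
    (hA : 0 < A) (hB : 0 < B) (hC : 0 < C) :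
    let M : ℝ → ℝ := fun t => t ^ (p - q) * A - t ^ (r - q) * B
    let tmax : ℝ := ((p - q) * A / ((r - q) * B)) ^ (1 / (r - p))
    let Φ : ℝ → ℝ := fun t => t ^ p / p * A - t ^ q / q * C - t ^ r / r * B
    C < M tmax →
    ∃ t₀ t₁ : ℝ, 0 < t₀ ∧ t₀ < t₁ ∧
      deriv Φ t₀ = 0 ∧ deriv Φ t₁ = 0 ∧
      (∀ t : ℝ, 0 < t → deriv Φ t = 0 → t = t₀ ∨ t = t₁) ∧
      0 < deriv (deriv Φ) t₀ ∧ deriv (deriv Φ) t₁ < 0 := by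
  intro M tmax Φ hCM
  have hp : 1 < p := hq.trans hqp
  have hr : 1 < r := hp.trans hpr
  have hpq : 0 < p - q := by linarith
  have hrq : 0 < r - q := by linarith
  have hrp : 0 < r - p := by linarith
  -- tmax facts
  have hx : 0 < (p - q) * A / ((r - q) * B) := by positivity
  have htm : 0 < tmax := Real.rpow_pos_of_pos hx _
  have htmx : tmax ^ (r - p) = (p - q) * A / ((r - q) * B) := by
    show (((p - q) * A / ((r - q) * B)) ^ (1 / (r - p))) ^ (r - p) = _
    rw [one_div]
    exact Real.rpow_inv_rpow hx.le hrp.ne'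
  -- auxiliary functions
  set ψ : ℝ → ℝ := fun t => t ^ (p - 1) * A - t ^ (q - 1) * C - t ^ (r - 1) * B with hψdef
  set Md : ℝ → ℝ :=
    fun t => (p - q) * t ^ (p - q - 1) * A - (r - q) * t ^ (r - q - 1) * B with hMddef
  -- Φ has derivative ψ on (0,∞)
  have hΦd : ∀ t : ℝ, 0 < t → HasDerivAt Φ (ψ t) t := by
    intro t ht
    have h1 := ((Real.hasDerivAt_rpow_const (x := t) (p := p) (Or.inl ht.ne')).div_const
      p).mul_const A
    have h2 := ((Real.hasDerivAt_rpow_const (x := t) (p := q) (Or.inl ht.ne')).div_const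
      q).mul_const C
    have h3 := ((Real.hasDerivAt_rpow_const (x := t) (p := r) (Or.inl ht.ne')).div_const
      r).mul_const B
    have H := (h1.sub h2).sub h3
    show HasDerivAt (fun t : ℝ => t ^ p / p * A - t ^ q / q * C - t ^ r / r * B) (ψ t) t
    refine H.congr_deriv ?_
    simp only [hψdef]
    field_simp
  -- ψ has derivative
  have hψd : ∀ t : ℝ, 0 < t →
      HasDerivAt ψ ((p - 1) * t ^ (p - 1 - 1) * A - (q - 1) * t ^ (q - 1 - 1) * C
        - (r - 1) * t ^ (r - 1 - 1) * B) t := by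
    intro t ht
    have h1 := (Real.hasDerivAt_rpow_const (x := t) (p := p - 1) (Or.inl ht.ne')).mul_const A
    have h2 := (Real.hasDerivAt_rpow_const (x := t) (p := q - 1) (Or.inl ht.ne')).mul_const C
    have h3 := (Real.hasDerivAt_rpow_const (x := t) (p := r - 1) (Or.inl ht.ne')).mul_const B
    have H := (h1.sub h2).sub h3
    exact H
  -- M has derivative Md
  have hMd : ∀ t : ℝ, 0 < t → HasDerivAt M (Md t) t := by
    intro t ht
    have h1 := (Real.hasDerivAt_rpow_const (x := t) (p := p - q) (Or.inl ht.ne')).mul_const A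
    have h2 := (Real.hasDerivAt_rpow_const (x := t) (p := r - q) (Or.inl ht.ne')).mul_const B
    have H := h1.sub h2
    show HasDerivAt (fun t : ℝ => t ^ (p - q) * A - t ^ (r - q) * B) (Md t) t
    exact H
  -- continuity of M
  have hMc : Continuous M := by
    have c1 : Continuous fun t : ℝ => t ^ (p - q) :=
      continuous_iff_continuousAt.2 fun x => Real.continuousAt_rpow_const x _ (Or.inr hpq.le)
    have c2 : Continuous fun t : ℝ => t ^ (r - q) :=
      continuous_iff_continuousAt.2 fun x => Real.continuousAt_rpow_const x _ (Or.inr hrq.le)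
    exact (c1.mul continuous_const).sub (c2.mul continuous_const)
  -- factorization of ψ
  have key1 : ∀ t : ℝ, 0 < t → ψ t = t ^ (q - 1) * (M t - C) := by
    intro t ht
    have e1 : t ^ (p - 1) = t ^ (q - 1) * t ^ (p - q) := by
      rw [← Real.rpow_add ht]; congr 1; ring
    have e2 : t ^ (r - 1) = t ^ (q - 1) * t ^ (r - q) := by
      rw [← Real.rpow_add ht]; congr 1; ring
    simp only [hψdef]
    show _ = t ^ (q - 1) * ((t ^ (p - q) * A - t ^ (r - q) * B) - C)
    rw [e1, e2]; ring
  -- sign of Md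
  have hMdsign : ∀ t : ℝ, 0 < t →
      Md t = t ^ (p - q - 1) * ((p - q) * A - (r - q) * t ^ (r - p) * B) := by
    intro t ht
    have e : t ^ (r - q - 1) = t ^ (p - q - 1) * t ^ (r - p) := by
      rw [← Real.rpow_add ht]; congr 1; ring
    simp only [hMddef]
    rw [e]; ring
  have hMdpos : ∀ t : ℝ, 0 < t → t < tmax → 0 < Md t := by
    intro t ht htlt
    rw [hMdsign t ht]
    apply mul_pos (Real.rpow_pos_of_pos ht _)
    have h1 : t ^ (r - p) < tmax ^ (r - p) := Real.rpow_lt_rpow ht.le htlt hrp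
    rw [htmx] at h1
    have h2 : t ^ (r - p) * ((r - q) * B) < (p - q) * A / ((r - q) * B) * ((r - q) * B) :=
      mul_lt_mul_of_pos_right h1 (by positivity)
    rw [div_mul_cancel₀] at h2
    · nlinarith
    · positivity
  have hMdneg : ∀ t : ℝ, tmax < t → Md t < 0 := by
    intro t htlt
    have ht : 0 < t := htm.trans htlt
    rw [hMdsign t ht]
    apply mul_neg_of_pos_of_neg (Real.rpow_pos_of_pos ht _)
    have h1 : tmax ^ (r - p) < t ^ (r - p) := Real.rpow_lt_rpow htm.le htlt hrp
    rw [htmx] at h1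
    have h2 : (p - q) * A / ((r - q) * B) * ((r - q) * B) < t ^ (r - p) * ((r - q) * B) :=
      mul_lt_mul_of_pos_right h1 (by positivity)
    rw [div_mul_cancel₀] at h2
    · nlinarith
    · positivity
  -- monotonicity of M
  have hmono : StrictMonoOn M (Icc 0 tmax) := by
    apply strictMonoOn_of_deriv_pos (convex_Icc _ _) hMc.continuousOn
    intro t ht
    rw [interior_Icc] at ht
    rw [(hMd t ht.1).deriv]
    exact hMdpos t ht.1 ht.2
  have hanti : StrictAntiOn M (Ici tmax) := by
    apply strictAntiOn_of_deriv_neg (convex_Ici _) hMc.continuousOn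
    intro t ht
    rw [interior_Ici] at ht
    rw [(hMd t (htm.trans ht)).deriv]
    exact hMdneg t ht
  -- M 0 = 0
  have hM0 : M 0 = 0 := by
    show (0 : ℝ) ^ (p - q) * A - (0 : ℝ) ^ (r - q) * B = 0
    rw [Real.zero_rpow hpq.ne', Real.zero_rpow hrq.ne']
    ring
  -- existence of t₀
  obtain ⟨t₀, ht₀mem, hMt₀⟩ :=
    intermediate_value_Ioo htm.le hMc.continuousOn (by rw [hM0]; exact ⟨hC, hCM⟩)
  -- existence of t₁
  set b : ℝ := max (tmax + 1) ((A / B) ^ (1 / (r - p)) + 1) with hbdef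
  have hbtm : tmax < b := lt_of_lt_of_le (lt_add_one tmax) (le_max_left _ _)
  have hb0 : 0 < b := htm.trans hbtm
  have hbAB : (A / B) ^ (1 / (r - p)) < b :=
    lt_of_lt_of_le (lt_add_one _) (le_max_right _ _)
  have hMb : M b < C := by
    have hAB : 0 < A / B := by positivity
    have hbr : A / B < b ^ (r - p) := by
      calc A / B = ((A / B) ^ (1 / (r - p))) ^ (r - p) := by
            rw [one_div, Real.rpow_inv_rpow hAB.le hrp.ne']
        _ < b ^ (r - p) :=
            Real.rpow_lt_rpow (Real.rpow_nonneg hAB.le _) hbAB hrp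
    have hAlt : A < b ^ (r - p) * B := by
      rw [div_lt_iff₀ hB] at hbr; linarith
    have e : b ^ (r - q) = b ^ (p - q) * b ^ (r - p) := by
      rw [← Real.rpow_add hb0]; congr 1; ring
    have : M b = b ^ (p - q) * (A - b ^ (r - p) * B) := by
      show b ^ (p - q) * A - b ^ (r - q) * B = _
      rw [e]; ring
    rw [this]
    have := mul_neg_of_pos_of_neg (Real.rpow_pos_of_pos hb0 (p - q)) (by linarith : A - b ^ (r - p) * B < 0)
    linarith
  obtain ⟨t₁, ht₁mem, hMt₁⟩ :=
    intermediate_value_Ioo' hbtm.le hMc.continuousOn ⟨hMb, hCM⟩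
  -- basic positions
  have ht₀pos : 0 < t₀ := ht₀mem.1
  have ht₀tm : t₀ < tmax := ht₀mem.2
  have ht₁tm : tmax < t₁ := ht₁mem.1
  have ht₁pos : 0 < t₁ := htm.trans ht₁tm
  have ht₀t₁ : t₀ < t₁ := ht₀tm.trans ht₁tm
  -- critical point characterization
  have hcrit : ∀ t : ℝ, 0 < t → (deriv Φ t = 0 ↔ M t = C) := by
    intro t ht
    rw [(hΦd t ht).deriv, key1 t ht]
    constructor
    · intro h
      rcases mul_eq_zero.1 h with h | h
      · exact absurd h (Real.rpow_pos_of_pos ht _).ne'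
      · linarith [sub_eq_zero.1 h]
    · intro h; rw [h]; ring
  -- second derivative computation
  have hsecond : ∀ t : ℝ, 0 < t → M t = C → deriv (deriv Φ) t = t ^ (q - 1) * Md t := by
    intro t ht hMt
    have hev : deriv Φ =ᶠ[𝓝 t] ψ := by
      filter_upwards [Ioi_mem_nhds ht] with s hs using (hΦd s hs).deriv
    rw [hev.deriv_eq, (hψd t ht).deriv]
    have hMt' : t ^ (p - q) * A - t ^ (r - q) * B = C := hMt
    have e1 : t ^ (p - 1 - 1) = t ^ (q - 1 - 1) * t ^ (p - q) := by
      rw [← Real.rpow_add ht]; congr 1; ring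
    have e2 : t ^ (r - 1 - 1) = t ^ (q - 1 - 1) * t ^ (r - q) := by
      rw [← Real.rpow_add ht]; congr 1; ring
    have e3 : t ^ (q - 1) * t ^ (p - q - 1) = t ^ (q - 1 - 1) * t ^ (p - q) := by
      rw [← Real.rpow_add ht, ← Real.rpow_add ht]; congr 1; ring
    have e4 : t ^ (q - 1) * t ^ (r - q - 1) = t ^ (q - 1 - 1) * t ^ (r - q) := by
      rw [← Real.rpow_add ht, ← Real.rpow_add ht]; congr 1; ring
    simp only [hMddef]
    rw [← hMt', e1, e2]
    linear_combination (-((p - q) * A)) * e3 + ((r - q) * B) * e4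
  -- assemble
  refine ⟨t₀, t₁, ht₀pos, ht₀t₁, (hcrit t₀ ht₀pos).2 hMt₀, (hcrit t₁ ht₁pos).2 hMt₁, ?_, ?_, ?_⟩
  · intro t ht hdt
    have hMt : M t = C := (hcrit t ht).1 hdt
    rcases le_or_gt t tmax with h | h
    · left
      exact hmono.injOn ⟨ht.le, h⟩ ⟨ht₀pos.le, ht₀tm.le⟩ (hMt.trans hMt₀.symm)
    · right
      exact hanti.injOn (le_of_lt h) (le_of_lt ht₁tm) (hMt.trans hMt₁.symm)
  · rw [hsecond t₀ ht₀pos hMt₀]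
    exact mul_pos (Real.rpow_pos_of_pos ht₀pos _) (hMdpos t₀ ht₀pos ht₀tm)
  · rw [hsecond t₁ ht₁pos hMt₁]
    exact mul_neg_of_pos_of_neg (Real.rpow_pos_of_pos ht₁pos _) (hMdneg t₁ ht₁tm)
end

section
/- Let 1 < q < p < r, A > 0, B ≤ 0, C > 0, and Φ(t) = (t^p/p)A - (t^q/q)C - (t^r/r)B for t > 0. Then Φ has a unique critical point t₂ > 0 in (0,∞), and Φ''(t₂) > 0 (so t₂ is a local minimum). -/
/-!
For `t > 0` the derivative factors as `Φ'(t) = t^(q-1) (g(t) - C)` with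
`g(t) = A t^(p-q) - B t^(r-q)`, which is `powComb A B (p-q) (r-q)` below. Since `A > 0`,
`B ≤ 0` and `q < p < r`, the function `g` is continuous and strictly increasing on `[0, ∞)`
with `g(0) = 0` and `g(t) → ∞`, so `g = C` has exactly one positive solution `t₂`, and these
are the positive zeros of `Φ'`. Differentiating the factorisation at `t₂`, the term carrying
`g(t₂) - C` vanishes and `Φ''(t₂) = t₂^(q-1) g'(t₂) > 0`.
-/

open Real Filter Set Topology

noncomputable def powComb (A B a b t : ℝ) : ℝ := A * t ^ a - B * t ^ b

section powComb

variable {A B a b : ℝ}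

lemma powComb_zero (ha : 0 < a) (hb : 0 < b) : powComb A B a b 0 = 0 := by
  simp [powComb, zero_rpow ha.ne', zero_rpow hb.ne']

lemma continuous_powComb (ha : 0 ≤ a) (hb : 0 ≤ b) : Continuous (powComb A B a b) :=
  (continuous_const.mul (continuous_id.rpow_const fun _ => Or.inr ha)).sub
    (continuous_const.mul (continuous_id.rpow_const fun _ => Or.inr hb))

lemma strictMonoOn_powComb (hA : 0 < A) (hB : B ≤ 0) (ha : 0 < a) (hb : 0 ≤ b) :
    StrictMonoOn (powComb A B a b) (Ici 0) := by
  intro x hx y _ hxy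
  have hpos : A * x ^ a < A * y ^ a := mul_lt_mul_of_pos_left (rpow_lt_rpow hx hxy ha) hA
  have hneg : -B * x ^ b ≤ -B * y ^ b :=
    mul_le_mul_of_nonneg_left (rpow_le_rpow hx hxy.le hb) (neg_nonneg.2 hB)
  simp only [powComb]
  linarith

lemma tendsto_powComb_atTop (hA : 0 < A) (hB : B ≤ 0) (ha : 0 < a) :
    Tendsto (powComb A B a b) atTop atTop := by
  refine tendsto_atTop_mono' _ ?_ ((tendsto_rpow_atTop ha).const_mul_atTop hA)
  filter_upwards [eventually_ge_atTop 0] with t ht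
  have : B * t ^ b ≤ 0 := mul_nonpos_of_nonpos_of_nonneg hB (rpow_nonneg ht b)
  simp only [powComb]
  linarith

lemma existsUnique_pos_powComb_eq (hA : 0 < A) (hB : B ≤ 0) (ha : 0 < a) (hb : 0 < b)
    {C : ℝ} (hC : 0 < C) : ∃! t, 0 < t ∧ powComb A B a b t = C := by
  obtain ⟨M, hCM, hM⟩ :=
    ((tendsto_powComb_atTop (b := b) hA hB ha).eventually_ge_atTop C).and
      (eventually_ge_atTop 0) |>.exists
  have hmem : C ∈ Icc (powComb A B a b 0) (powComb A B a b M) :=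
    ⟨(powComb_zero ha hb).symm ▸ hC.le, hCM⟩
  obtain ⟨t, ht, htC⟩ :=
    intermediate_value_Icc hM (continuous_powComb ha.le hb.le).continuousOn hmem
  have ht0 : t ≠ 0 := by
    rintro rfl
    rw [powComb_zero ha hb] at htC
    exact hC.ne htC
  refine ⟨t, ⟨lt_of_le_of_ne ht.1 (Ne.symm ht0), htC⟩, fun s ⟨hs, hsC⟩ => ?_⟩
  exact (strictMonoOn_powComb hA hB ha hb.le).injOn hs.le ht.1 (hsC.trans htC.symm)

lemma hasDerivAt_powComb {t : ℝ} (ht : 0 < t) :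
    HasDerivAt (powComb A B a b) (A * (a * t ^ (a - 1)) - B * (b * t ^ (b - 1))) t :=
  ((hasDerivAt_rpow_const (Or.inl ht.ne')).const_mul A).sub
    ((hasDerivAt_rpow_const (Or.inl ht.ne')).const_mul B)

lemma powComb_deriv_pos (hA : 0 < A) (hB : B ≤ 0) (ha : 0 < a) (hb : 0 ≤ b) {t : ℝ}
    (ht : 0 < t) : 0 < A * (a * t ^ (a - 1)) - B * (b * t ^ (b - 1)) := by
  have hpos : 0 < A * (a * t ^ (a - 1)) := by have := rpow_pos_of_pos ht (a - 1); positivity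
  have hneg : B * (b * t ^ (b - 1)) ≤ 0 :=
    mul_nonpos_of_nonpos_of_nonneg hB (mul_nonneg hb (rpow_nonneg ht.le _))
  linarith

end powComb

lemma hasDerivAt_rpow_div_self {s t : ℝ} (hs : s ≠ 0) (ht : 0 < t) :
    HasDerivAt (fun t => t ^ s / s) (t ^ (s - 1)) t :=
  ((hasDerivAt_rpow_const (Or.inl ht.ne')).div_const s).congr_deriv (mul_div_cancel_left₀ _ hs)

lemma hasDerivAt_potential {p q r A B C t : ℝ} (hp : p ≠ 0) (hq : q ≠ 0) (hr : r ≠ 0)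
    (ht : 0 < t) :
    HasDerivAt (fun t => t ^ p / p * A - t ^ q / q * C - t ^ r / r * B)
      (t ^ (q - 1) * (powComb A B (p - q) (r - q) t - C)) t := by
  refine ((((hasDerivAt_rpow_div_self hp ht).mul_const A).sub
    ((hasDerivAt_rpow_div_self hq ht).mul_const C)).sub
    ((hasDerivAt_rpow_div_self hr ht).mul_const B)).congr_deriv ?_
  have hp' : t ^ (p - 1) = t ^ (q - 1) * t ^ (p - q) := by rw [← rpow_add ht]; ring_nf
  have hr' : t ^ (r - 1) = t ^ (q - 1) * t ^ (r - q) := by rw [← rpow_add ht]; ring_nf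
  rw [hp', hr', powComb]
  ring

theorem stmt_16 (p q r A B C : ℝ) (hq : 1 < q) (hqp : q < p) (hpr : p < r)
    (hA : 0 < A) (hB : B ≤ 0) (hC : 0 < C) :
    let Φ : ℝ → ℝ := fun t => t ^ p / p * A - t ^ q / q * C - t ^ r / r * B
    ∃ t₂ : ℝ, 0 < t₂ ∧ deriv Φ t₂ = 0 ∧
      (∀ t : ℝ, 0 < t → deriv Φ t = 0 → t = t₂) ∧
      0 < deriv (deriv Φ) t₂ := by
  intro Φ
  have hpq : 0 < p - q := sub_pos.2 hqp
  have hrq : 0 < r - q := by linarith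
  obtain ⟨t₂, ⟨ht₂, hgt₂⟩, huniq⟩ := existsUnique_pos_powComb_eq hA hB hpq hrq hC
  have hΦ : ∀ t, 0 < t →
      HasDerivAt Φ (t ^ (q - 1) * (powComb A B (p - q) (r - q) t - C)) t :=
    fun t ht => hasDerivAt_potential (by linarith) (by linarith) (by linarith) ht
  refine ⟨t₂, ht₂, by rw [(hΦ t₂ ht₂).deriv, hgt₂, sub_self, mul_zero],
    fun t ht hΦt => ?_, ?_⟩
  · rw [(hΦ t ht).deriv] at hΦt
    have hpow : t ^ (q - 1) ≠ 0 := (rpow_pos_of_pos ht _).ne'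
    exact huniq t ⟨ht, sub_eq_zero.1 ((mul_eq_zero.1 hΦt).resolve_left hpow)⟩
  · have hderiv :
        deriv Φ =ᶠ[𝓝 t₂] fun t => t ^ (q - 1) * (powComb A B (p - q) (r - q) t - C) :=
      eventually_of_mem (Ioi_mem_nhds ht₂) fun t ht => (hΦ t ht).deriv
    have hderiv' := (hasDerivAt_rpow_const (p := q - 1) (Or.inl ht₂.ne')).fun_mul
      ((hasDerivAt_powComb (A := A) (B := B) (a := p - q) (b := r - q) ht₂).sub_const C)
    rw [hderiv.deriv_eq, hderiv'.deriv, hgt₂, sub_self, mul_zero, zero_add]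
    exact mul_pos (rpow_pos_of_pos ht₂ _) (powComb_deriv_pos hA hB hpq hrq.le ht₂)
end
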